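/- For p = q = r = 0.05, feedback strictly enlarges the achievable secrecy rate region: Din(0.05,0.05,0.05) ⊊ Din1(0.05,0.05,0.05). In particular, the point (R₁,R₂) = (1.0, 0.9) belongs to Din1(0.05,0.05,0.05) but not to Din(0.05,0.05,0.05). -/

import Mathlib

/-- The binary entropy function to base 2, with the convention h(0)=h(1)=0
(automatic since `Real.logb 2 0 = 0`). -/
noncomputable def binEnt (x : ℝ) : ℝ := -x * Real.logb 2 x - (1 - x) * Real.logb 2 (1 - x)

/-- Non-feedback inner bound for the Dueck-type example with `Z₁ → Z₀ → Z₂`. -/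
noncomputable def Din (p q r : ℝ) : Set (ℝ × ℝ) :=
  {R : ℝ × ℝ | 0 ≤ R.1 ∧ R.1 ≤ 1 - binEnt q ∧ 0 ≤ R.2 ∧ R.2 ≤ 1 - binEnt r}

/-- Secret-key feedback inner bound for the Dueck-type example with `Z₁ → Z₀ → Z₂`. -/
noncomputable def Din1 (p q r : ℝ) : Set (ℝ × ℝ) :=
  {R : ℝ × ℝ | 0 ≤ R.1 ∧ 0 ≤ R.2 ∧ R.1 ≤ 1 ∧ R.2 ≤ 1 ∧
    R.1 ≤ 2 - binEnt p - binEnt q ∧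
    R.2 ≤ 2 - binEnt p - binEnt r ∧
    R.1 + R.2 ≤ 3 - binEnt p - binEnt q - binEnt r}

/-- Hybrid feedback inner bound for the Dueck-type example with `Z₁ → Z₀ → Z₂`. -/
noncomputable def Din2 (p q r : ℝ) : Set (ℝ × ℝ) :=
  {R : ℝ × ℝ | 0 ≤ R.1 ∧ 0 ≤ R.2 ∧ R.1 ≤ 1 + binEnt q ∧ R.2 ≤ 1 + binEnt r ∧
    R.1 ≤ 2 - binEnt p - binEnt q ∧
    R.2 ≤ 2 - binEnt p - binEnt r ∧
    R.1 + R.2 ≤ 3 - binEnt p - binEnt q - binEnt r}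

/-- Cut-set outer bound for the Dueck-type example with `Z₁ → Z₀ → Z₂`. -/
noncomputable def Dout (p q r : ℝ) : Set (ℝ × ℝ) :=
  {R : ℝ × ℝ | 0 ≤ R.1 ∧ 0 ≤ R.2 ∧
    R.1 ≤ 2 - binEnt p - binEnt q ∧
    R.2 ≤ 2 - binEnt p - binEnt r ∧
    R.1 + R.2 ≤ 3 - binEnt p - binEnt q - binEnt r}

/-!
Since `0 ≤ h ≤ 1` on `[0, 1]`, every constraint of `Din` implies the corresponding ones of `Din1`.
Without feedback user 1 is held to `1 - h(q) < 1` for `0 < q < 1`, while `Din1` admits rate `1`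
for user 1 as long as the entropy penalties are small: with `h(0.05) ≈ 0.286` the point `(1, 0.9)`
meets every constraint of `Din1`.
-/

open Real Set

lemma binEnt_eq_binEntropy_div_log_two (x : ℝ) : binEnt x = binEntropy x / log 2 := by
  rw [binEnt, binEntropy, logb, logb, log_inv, log_inv]
  ring

lemma binEnt_pos {x : ℝ} (h₀ : 0 < x) (h₁ : x < 1) : 0 < binEnt x := by
  rw [binEnt_eq_binEntropy_div_log_two]
  exact div_pos (binEntropy_pos h₀ h₁) (log_pos one_lt_two)

lemma binEnt_nonneg {x : ℝ} (h₀ : 0 ≤ x) (h₁ : x ≤ 1) : 0 ≤ binEnt x := by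
  rw [binEnt_eq_binEntropy_div_log_two]
  exact div_nonneg (binEntropy_nonneg h₀ h₁) (log_nonneg one_le_two)

lemma binEnt_le_one (x : ℝ) : binEnt x ≤ 1 := by
  rw [binEnt_eq_binEntropy_div_log_two, div_le_one (log_pos one_lt_two)]
  exact binEntropy_le_log_two

lemma binEnt_five_hundredths_le : binEnt 0.05 ≤ 0.3 := by
  have hlog2 := log_two_gt_d9
  have hbin : binEntropy 0.05 = 0.05 * log 20 + 0.95 * log (20 / 19) := by
    norm_num [binEntropy]
  have hlog20 : log 20 = 4 * log 2 + log (5 / 4) := by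
    rw [show (20 : ℝ) = 2 ^ 4 * (5 / 4) by norm_num, log_mul (by norm_num) (by norm_num), log_pow]
    norm_num
  have hlog54 : log (5 / 4) ≤ 5 / 4 - 1 := log_le_sub_one_of_pos (by norm_num)
  have hlog2019 : log (20 / 19) ≤ 20 / 19 - 1 := log_le_sub_one_of_pos (by norm_num)
  rw [binEnt_eq_binEntropy_div_log_two, div_le_iff₀ (by linarith), hbin, hlog20]
  norm_num at hlog54 hlog2019 hlog2 ⊢
  linarith

lemma Din_subset_Din1 {p q r : ℝ} (hq : q ∈ Icc 0 1) (hr : r ∈ Icc 0 1) :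
    Din p q r ⊆ Din1 p q r := by
  rintro ⟨R₁, R₂⟩ ⟨hR₁, hR₁q, hR₂, hR₂r⟩
  have hq₀ := binEnt_nonneg hq.1 hq.2
  have hr₀ := binEnt_nonneg hr.1 hr.2
  have hp₁ := binEnt_le_one p
  exact ⟨hR₁, hR₂, by linarith, by linarith, by linarith, by linarith, by linarith⟩

lemma one_mk_notMem_Din {p q r : ℝ} (hq : q ∈ Ioo 0 1) (y : ℝ) :
    ((1, y) : ℝ × ℝ) ∉ Din p q r := by
  rintro ⟨-, h, -⟩
  have := binEnt_pos hq.1 hq.2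
  linarith

lemma one_point_nine_mem_Din1 {p : ℝ} (hp : binEnt p ≤ 11 / 30) :
    ((1.0, 0.9) : ℝ × ℝ) ∈ Din1 p p p := by
  refine ⟨?_, ?_, ?_, ?_, ?_, ?_, ?_⟩ <;> norm_num <;> linarith

/-- For `p = q = r = 0.05`, feedback strictly enlarges the achievable secrecy
rate region; the point `(1.0, 0.9)` witnesses the gap. -/
theorem Din_ssubset_Din1 :
    Din 0.05 0.05 0.05 ⊂ Din1 0.05 0.05 0.05 ∧
    ((1.0, 0.9) : ℝ × ℝ) ∈ Din1 0.05 0.05 0.05 ∧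
    ((1.0, 0.9) : ℝ × ℝ) ∉ Din 0.05 0.05 0.05 := by
  have hnoise : (0.05 : ℝ) ∈ Ioo 0 1 := by norm_num
  have hmem : ((1.0, 0.9) : ℝ × ℝ) ∈ Din1 0.05 0.05 0.05 :=
    one_point_nine_mem_Din1 (binEnt_five_hundredths_le.trans (by norm_num))
  have hnotMem : ((1.0, 0.9) : ℝ × ℝ) ∉ Din 0.05 0.05 0.05 := by
    convert one_mk_notMem_Din (p := 0.05) (r := 0.05) hnoise 0.9 using 3
    norm_num
  have hsub := Din_subset_Din1 (p := 0.05) (Ioo_subset_Icc_self hnoise) (Ioo_subset_Icc_self hnoise)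
  exact ⟨(ssubset_iff_of_subset hsub).2 ⟨_, hmem, hnotMem⟩, hmem, hnotMem⟩
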